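/- The flexibility τ of a signed graph G is zero if and only if G has no cycle containing both a positive edge and a negative edge. -/

import Mathlib

open scoped Classical
open Polynomial

namespace SGPaper

/-- A weighted signed graph on `n` vertices, given by its symmetric hollow
matrix of edge weights (a nonzero entry `w i j` is the weight of the edge `ij`;
positive edges have positive weight, negative edges negative weight). -/
structure WSG (n : ℕ) where
  w : Matrix (Fin n) (Fin n) ℝ
  symm : w.IsSymm
  loopless : ∀ i, w i i = 0

variable {n : ℕ}

/-- The underlying simple graph. -/
def WSG.graph (Γ : WSG n) : SimpleGraph (Fin n) :=
  SimpleGraph.fromRel (fun i j => Γ.w i j ≠ 0)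

/-- The spanning subgraph of positive edges. -/
def WSG.posGraph (Γ : WSG n) : SimpleGraph (Fin n) :=
  SimpleGraph.fromRel (fun i j => 0 < Γ.w i j)

/-- The spanning subgraph of negative edges. -/
def WSG.negGraph (Γ : WSG n) : SimpleGraph (Fin n) :=
  SimpleGraph.fromRel (fun i j => Γ.w i j < 0)

/-- Number of connected components of a graph. -/
noncomputable def comps {V : Type*} (G : SimpleGraph V) : ℕ :=
  Nat.card G.ConnectedComponent

/-- Weighted Laplacian `L = A - D`. -/
def WSG.lap (Γ : WSG n) : Matrix (Fin n) (Fin n) ℝ :=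
  Γ.w - Matrix.diagonal (fun i => ∑ j, Γ.w i j)

theorem WSG.lap_isHermitian (Γ : WSG n) : Γ.lap.IsHermitian := by
  have h : Γ.lap.IsSymm := Γ.symm.sub (Matrix.isSymm_diagonal _)
  exact Matrix.IsHermitian.ext fun i j => by
    first
    | simpa using h.apply i j
    | simpa using (h.apply i j).symm

/-- Number of positive eigenvalues of the Laplacian. -/
noncomputable def WSG.nPos (Γ : WSG n) : ℕ :=
  (Finset.univ.filter fun i => 0 < Γ.lap_isHermitian.eigenvalues i).card

/-- Number of negative eigenvalues of the Laplacian. -/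
noncomputable def WSG.nNeg (Γ : WSG n) : ℕ :=
  (Finset.univ.filter fun i => Γ.lap_isHermitian.eigenvalues i < 0).card

/-- Multiplicity of `0` as an eigenvalue of the Laplacian. -/
noncomputable def WSG.nZero (Γ : WSG n) : ℕ :=
  (Finset.univ.filter fun i => Γ.lap_isHermitian.eigenvalues i = 0).card

/-- The Laplacian inertia `(n₊, n₋, n₀)`. -/
noncomputable def WSG.inertia (Γ : WSG n) : ℕ × ℕ × ℕ := (Γ.nPos, Γ.nNeg, Γ.nZero)

/-- A signed graph: a pair of edge-disjoint simple graphs of positive and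
negative edges on the vertex set `Fin n`. -/
structure SignedGraph (n : ℕ) where
  pos : SimpleGraph (Fin n)
  neg : SimpleGraph (Fin n)
  disj : ∀ i j, ¬(pos.Adj i j ∧ neg.Adj i j)

/-- The underlying (unsigned) simple graph. -/
def SignedGraph.graph {n : ℕ} (G : SignedGraph n) : SimpleGraph (Fin n) := G.pos ⊔ G.neg

/-- `Γ` is a consistent weighting of the signed graph `G`: the positive edges of
`Γ` are exactly the positive edges of `G` and likewise for negative edges. -/
def Consistent {n : ℕ} (G : SignedGraph n) (Γ : WSG n) : Prop :=
  Γ.posGraph = G.pos ∧ Γ.negGraph = G.neg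

/-- `G` has the unique Laplacian inertia `T`: every consistent weighting of `G`
has Laplacian inertia `T`. -/
def HasUniqueInertia {n : ℕ} (G : SignedGraph n) (T : ℕ × ℕ × ℕ) : Prop :=
  ∀ Γ : WSG n, Consistent G Γ → Γ.inertia = T

/-!
Write `τ(P, N) = |V| + c(P ⊔ N) - c(P) - c(N)` and build `N` one edge `uv` at a time. Adding `uv`
to a graph merges two components if `u` and `v` were not yet connected and changes nothing
otherwise, so `τ` grows by one when `u` and `v` are connected in `P ⊔ N` but not in `N`, and stays
put otherwise. Hence `τ` is monotone in `N` and vanishes at `N = ⊥`.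

Without mixed cycles, a `u`-`v` path in `P ⊔ N` closes up with the new negative edge to a cycle,
which is then entirely negative, so `u` and `v` were already connected in `N` and `τ` stays `0`.
If a cycle `C` has a negative edge `ab` and a positive edge `f`, let `N₀` consist of the negative
edges of `C` other than `ab`. As `C` minus `f` is acyclic, `a` and `b` are not connected in `N₀`,
while `C` minus `ab` connects them in `P ⊔ N₀`; so `τ(P, N) ≥ τ(P, N₀ + ab) = τ(P, N₀) + 1 ≥ 1`.
-/

end SGPaper

namespace SimpleGraph

variable {V : Type*} {G : SimpleGraph V} {u v x y : V}

theorem sup_edge_induction [Finite V] {motive : SimpleGraph V → Prop} (bot : motive ⊥)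
    (sup_edge : ∀ H a b, motive H → motive (H ⊔ edge a b)) (G : SimpleGraph V) : motive G := by
  have key (s : Set (Sym2 V)) (hs : s.Finite) : motive (fromEdgeSet s) := by
    induction s, hs using Set.Finite.induction_on with
    | empty => simpa using bot
    | @insert e s _ _ ih =>
      induction e using Sym2.ind with | _ a b =>
      rw [Set.insert_eq, fromEdgeSet_union, sup_comm]
      exact sup_edge _ a b ih
  simpa using key G.edgeSet G.edgeSet.toFinite

theorem reachable_sup_edge_iff :
    (G ⊔ edge u v).Reachable x y ↔ G.Reachable x y ∨ (G.Reachable x u ∧ G.Reachable v y) ∨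
      (G.Reachable x v ∧ G.Reachable u y) := by
  constructor
  · rintro ⟨p⟩
    induction p with
    | nil => exact .inl .rfl
    | cons h _ ih =>
      simp only [← ConnectedComponent.eq] at ih ⊢
      rw [sup_adj, edge_adj] at h
      grind [ConnectedComponent.connectedComponentMk_eq_of_adj]
  · have huv : (G ⊔ edge u v).Reachable u v := by
      by_cases h : u = v
      · exact h ▸ .rfl
      · exact Adj.reachable (Or.inr ((edge_adj ..).mpr ⟨.inl ⟨rfl, rfl⟩, h⟩))
    have hle {a b : V} : G.Reachable a b → (G ⊔ edge u v).Reachable a b := .mono le_sup_left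
    rintro (h | ⟨h₁, h₂⟩ | ⟨h₁, h₂⟩)
    · exact hle h
    · exact (hle h₁).trans (huv.trans (hle h₂))
    · exact (hle h₁).trans (huv.symm.trans (hle h₂))

theorem reachable_sup_edge_eq_of_reachable (h : G.Reachable u v) :
    (G ⊔ edge u v).Reachable = G.Reachable := by
  ext x y
  rw [reachable_sup_edge_iff]
  simp only [← ConnectedComponent.eq] at h ⊢
  grind

theorem card_connectedComponent_sup_edge_of_reachable (h : G.Reachable u v) :
    Nat.card (G ⊔ edge u v).ConnectedComponent = Nat.card G.ConnectedComponent := by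
  simp only [ConnectedComponent, reachable_sup_edge_eq_of_reachable h]

theorem card_connectedComponent_sup_edge_add_one_of_not_reachable [Finite V]
    (h : ¬G.Reachable u v) :
    Nat.card (G ⊔ edge u v).ConnectedComponent + 1 = Nat.card G.ConnectedComponent := by
  let φ (c : {c : G.ConnectedComponent // c ≠ G.connectedComponentMk v}) :
      (G ⊔ edge u v).ConnectedComponent := c.1.map (Hom.ofLE le_sup_left)
  have hφ : φ.Bijective := by
    rw [← ConnectedComponent.eq] at h
    constructor
    · rintro ⟨c, hc⟩ ⟨d, hd⟩ hcd
      induction c using ConnectedComponent.ind with | _ x =>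
      induction d using ConnectedComponent.ind with | _ y =>
      have := reachable_sup_edge_iff.mp (ConnectedComponent.exact hcd)
      simp only [Hom.ofLE_apply, ← ConnectedComponent.eq] at this
      rw [Subtype.mk.injEq]
      grind
    · intro c
      induction c using ConnectedComponent.ind with | _ x =>
      by_cases hx : G.connectedComponentMk x = G.connectedComponentMk v
      · refine ⟨⟨G.connectedComponentMk u, h⟩, ConnectedComponent.sound ?_⟩
        exact reachable_sup_edge_iff.mpr (.inr (.inl ⟨.rfl, (ConnectedComponent.exact hx).symm⟩))
      · exact ⟨⟨G.connectedComponentMk x, hx⟩, rfl⟩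
  rw [← Nat.card_eq_of_bijective φ hφ, ← Finite.card_option,
    Nat.card_congr (Equiv.optionSubtypeNe _)]

theorem card_connectedComponent_bot :
    Nat.card (⊥ : SimpleGraph V).ConnectedComponent = Nat.card V :=
  (Nat.card_eq_of_bijective _ ⟨fun _ _ h ↦ reachable_bot.mp (ConnectedComponent.exact h),
    Quot.mk_surjective⟩).symm

theorem Reachable.mem_of_forall_adj {s : Set V} (hs : ∀ ⦃a b⦄, G.Adj a b → a ∈ s → b ∈ s)
    (h : G.Reachable x y) (hx : x ∈ s) : y ∈ s := by
  obtain ⟨p⟩ := h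
  induction p with
  | nil => exact hx
  | cons ha _ ih => exact ih (hs ha hx)

theorem Walk.IsCycle.edges_subset_of_edges_subset [Finite V] {c : G.Walk u u} {d : G.Walk v v}
    (hc : c.IsCycle) (hd : d.IsCycle) (hdc : d.edges ⊆ c.edges) : c.edges ⊆ d.edges := by
  have := Fintype.ofFinite V
  set H := c.toSubgraph.spanningCoe
  have hcH : ∀ e ∈ c.edges, e ∈ H.edgeSet := fun e he ↦ by
    simpa [H, Walk.mem_edges_toSubgraph] using he
  have hd' := hd.transfer (fun e he ↦ hcH e (hdc he))
  -- in a 2-regular graph a cycle contains every edge at each of its vertices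
  have hdH {a : V} (ha : a ∈ d.support) (b : V) := hd'.adj_toSubgraph_iff_of_isCycles
    hc.isCycles_spanningCoe_toSubgraph (by simpa using ha) b
  have closed : ∀ ⦃a b⦄, H.Adj a b → a ∈ d.support → b ∈ d.support := fun a b hab ha ↦ by
    simpa using Subgraph.edge_vert _ ((hdH ha b).mpr hab).symm
  have hreach : ∀ a ∈ c.support, H.Reachable u a := fun a ha ↦
    ⟨(c.transfer H hcH).takeUntil a (by simpa using ha)⟩
  obtain ⟨e₀, he₀⟩ := List.exists_mem_of_ne_nil _ (Walk.edges_eq_nil.not.mpr hd.not_nil)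
  induction e₀ using Sym2.ind with | _ a₀ b₀ =>
  intro e he
  induction e using Sym2.ind with | _ a b =>
  have ha : a ∈ d.support := Reachable.mem_of_forall_adj (s := {x | x ∈ d.support}) closed
    ((hreach _ (c.fst_mem_support_of_mem_edges (hdc he₀))).symm.trans
      (hreach _ (c.fst_mem_support_of_mem_edges he))) (d.fst_mem_support_of_mem_edges he₀)
  simpa [Walk.adj_toSubgraph_iff_mem_edges] using (hdH ha b).mpr (hcH _ he)

theorem Walk.IsCycle.isAcyclic_deleteEdges [Finite V] {c : G.Walk u u} (hc : c.IsCycle)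
    {f : Sym2 V} (hf : f ∈ c.edges) : (c.toSubgraph.spanningCoe.deleteEdges {f}).IsAcyclic := by
  intro v d hd
  have hle : c.toSubgraph.spanningCoe.deleteEdges {f} ≤ G :=
    (deleteEdges_le _).trans (Subgraph.spanningCoe_le _)
  have hdc : ∀ e ∈ d.edges, e ∈ c.edges ∧ e ≠ f := fun e he ↦ by
    have := d.edges_subset_edgeSet he
    rw [edgeSet_deleteEdges] at this
    simpa [Walk.mem_edges_toSubgraph] using this
  have := hc.edges_subset_of_edges_subset (hd.mapLe hle)
    (by rw [Walk.edges_mapLe_eq_edges]; exact fun e he ↦ (hdc e he).1) hf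
  exact (hdc f (by simpa using this)).2 rfl

end SimpleGraph

namespace SGPaper

section Flexibility

open SimpleGraph

variable {V : Type*} {P N N' : SimpleGraph V} {u v : V}

noncomputable def flexibility (P N : SimpleGraph V) : ℤ :=
  Nat.card V + comps (P ⊔ N) - comps P - comps N

def HasMixedCycle (P N : SimpleGraph V) : Prop :=
  ∃ (u : V) (p : (P ⊔ N).Walk u u), p.IsCycle ∧
    (∃ e ∈ p.edges, e ∈ P.edgeSet) ∧ (∃ e ∈ p.edges, e ∈ N.edgeSet)

theorem flexibility_bot : flexibility P ⊥ = 0 := by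
  simp [flexibility, comps, card_connectedComponent_bot]

theorem HasMixedCycle.mono (h : N ≤ N') : HasMixedCycle P N → HasMixedCycle P N' := by
  rintro ⟨w, c, hc, hP, e, he, heN⟩
  have hle : P ⊔ N ≤ P ⊔ N' := sup_le_sup_left h P
  exact ⟨w, c.mapLe hle, hc.mapLe hle, by simpa using hP, e, by simpa using he, edgeSet_mono h heN⟩

theorem reachable_of_not_hasMixedCycle_sup_edge (hPN : Disjoint P (N ⊔ edge u v))
    (hmix : ¬HasMixedCycle P (N ⊔ edge u v)) (h : (P ⊔ N).Reachable u v) : N.Reachable u v := by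
  by_cases hN : N.Adj u v
  · exact hN.reachable
  by_cases huv : u = v
  · exact huv ▸ .rfl
  set N' := N ⊔ edge u v
  have hadj : N'.Adj u v := Or.inr ((edge_adj ..).mpr ⟨.inl ⟨rfl, rfl⟩, huv⟩)
  have hP : ¬P.Adj u v := (disjoint_left.mp hPN u v · hadj)
  have hdel : P ⊔ N ≤ (P ⊔ N').deleteEdges {s(u, v)} :=
    calc P ⊔ N = (P ⊔ N).deleteEdges {s(u, v)} := (deleteEdges_eq_self.mpr (by simp [hP, hN])).symm
      _ ≤ _ := deleteEdges_mono (sup_le_sup_left le_sup_left P)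
  obtain ⟨w, c, hc, he⟩ :=
    adj_and_reachable_delete_edges_iff_exists_cycle.mp ⟨Or.inr hadj, h.mono hdel⟩
  have hcN : ∀ e ∈ c.edges, e ∈ N'.edgeSet := fun e he' ↦ by
    have := c.edges_subset_edgeSet he'
    rw [edgeSet_sup] at this
    exact this.resolve_left fun heP ↦ hmix ⟨w, c, hc, ⟨e, he', heP⟩, s(u, v), he, hadj⟩
  have := (adj_and_reachable_delete_edges_iff_exists_cycle.mpr
    ⟨w, c.transfer N' hcN, hc.transfer hcN, by rwa [Walk.edges_transfer]⟩).2
  refine this.mono fun a b hab ↦ ?_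
  simp only [N', deleteEdges_adj, sup_adj, edge_adj, Set.mem_singleton_iff] at hab
  grind

variable [Finite V]

theorem comps_eq_comps_sup_edge_add (G : SimpleGraph V) (u v : V) :
    comps G = comps (G ⊔ edge u v) + if G.Reachable u v then 0 else 1 := by
  split_ifs with h
  · exact (card_connectedComponent_sup_edge_of_reachable h).symm
  · exact (card_connectedComponent_sup_edge_add_one_of_not_reachable h).symm

theorem flexibility_sup_edge :
    flexibility P (N ⊔ edge u v) = flexibility P N + (if N.Reachable u v then 0 else 1) -
      (if (P ⊔ N).Reachable u v then 0 else 1) := by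
  have hN := comps_eq_comps_sup_edge_add N u v
  have hPN := comps_eq_comps_sup_edge_add (P ⊔ N) u v
  rw [flexibility, flexibility, ← sup_assoc]
  split_ifs at * <;> omega

theorem flexibility_le_flexibility_sup_edge : flexibility P N ≤ flexibility P (N ⊔ edge u v) := by
  have : N.Reachable u v → (P ⊔ N).Reachable u v := .mono le_sup_right
  rw [flexibility_sup_edge]
  split_ifs <;> grind

theorem flexibility_mono_right (h : N ≤ N') : flexibility P N ≤ flexibility P N' := by
  suffices ∀ H, flexibility P N ≤ flexibility P (N ⊔ H) by
    simpa [sup_eq_right.mpr h] using this N'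
  intro H
  induction H using sup_edge_induction with
  | bot => simp
  | sup_edge H a b ih => exact ih.trans (sup_assoc N H _ ▸ flexibility_le_flexibility_sup_edge)

theorem flexibility_nonneg : 0 ≤ flexibility P N :=
  flexibility_bot (P := P) ▸ flexibility_mono_right bot_le

theorem flexibility_pos_of_sup_edge_le {N₀ : SimpleGraph V} {a b : V} (h : N₀ ⊔ edge a b ≤ N)
    (hN₀ : ¬N₀.Reachable a b) (hPN₀ : (P ⊔ N₀).Reachable a b) : 0 < flexibility P N :=
  calc 0 < flexibility P N₀ + 1 := by linarith [flexibility_nonneg (P := P) (N := N₀)]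
    _ = flexibility P (N₀ ⊔ edge a b) := by
      rw [flexibility_sup_edge, if_neg hN₀, if_pos hPN₀]; ring
    _ ≤ flexibility P N := flexibility_mono_right h

theorem flexibility_eq_zero_of_not_hasMixedCycle (hPN : Disjoint P N) (hmix : ¬HasMixedCycle P N) :
    flexibility P N = 0 := by
  induction N using sup_edge_induction with
  | bot => exact flexibility_bot
  | sup_edge N a b ih =>
    have hN : N ≤ N ⊔ edge a b := le_sup_left
    rw [flexibility_sup_edge, ih (hPN.mono_right hN) (hmix ∘ HasMixedCycle.mono hN)]
    have : (P ⊔ N).Reachable a b ↔ N.Reachable a b :=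
      ⟨reachable_of_not_hasMixedCycle_sup_edge hPN hmix, .mono le_sup_right⟩
    simp [this]

theorem flexibility_pos_of_hasMixedCycle (hPN : Disjoint P N) (hmix : HasMixedCycle P N) :
    0 < flexibility P N := by
  obtain ⟨w, c, hc, ⟨f, hf, hfP⟩, e, he, heN⟩ := hmix
  induction e using Sym2.ind with | _ a b =>
  set C := c.toSubgraph.spanningCoe
  have hNC : N ⊓ C ≤ C.deleteEdges {f} := fun x y hxy ↦ by
    refine (deleteEdges_adj ..).mpr ⟨hxy.2, fun hf' ↦ ?_⟩
    rw [Set.mem_singleton_iff] at hf'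
    exact Set.disjoint_left.mp (disjoint_edgeSet.mpr hPN) hfP (hf' ▸ hxy.1)
  refine flexibility_pos_of_sup_edge_le (N₀ := (N ⊓ C).deleteEdges {s(a, b)})
    (sup_le ((deleteEdges_le _).trans inf_le_left) ((edge_le_iff N).mpr (.inr heN))) ?_ ?_
  · have hab : C.Adj a b := by simpa [C, Walk.adj_toSubgraph_iff_mem_edges] using he
    have := isAcyclic_iff_forall_isBridge.mp (hc.isAcyclic_deleteEdges hf)
      ((mem_edgeSet _).mpr (hNC ⟨heN, hab⟩))
    exact fun h ↦ isBridge_iff.mp this (h.mono (deleteEdges_mono hNC))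
  · set L := P ⊔ N ⊓ C
    have hcL : ∀ g ∈ c.edges, g ∈ L.edgeSet := fun g hg ↦ by
      have := c.edges_subset_edgeSet hg
      have hgC : g ∈ C.edgeSet := by simpa [C, Walk.mem_edges_toSubgraph] using hg
      simp only [L, edgeSet_sup, edgeSet_inf, Set.mem_union, Set.mem_inter_iff] at this ⊢
      tauto
    have := (adj_and_reachable_delete_edges_iff_exists_cycle.mpr
      ⟨w, c.transfer L hcL, hc.transfer hcL, by rwa [Walk.edges_transfer]⟩).2
    exact this.mono (by rw [deleteEdges_sup]; exact sup_le_sup_right (deleteEdges_le _) _)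

theorem flexibility_eq_zero_iff (hPN : Disjoint P N) : flexibility P N = 0 ↔ ¬HasMixedCycle P N :=
  ⟨fun h hmix ↦ (flexibility_pos_of_hasMixedCycle hPN hmix).ne' h,
    flexibility_eq_zero_of_not_hasMixedCycle hPN⟩

end Flexibility

/-- The flexibility `τ = n + c - c₊ - c₋` of a signed graph is zero iff there is
no cycle containing both a positive edge and a negative edge. -/
theorem flexibility_zero_iff_no_mixed_cycle {n : ℕ} (G : SignedGraph n) :
    n + comps G.graph = comps G.pos + comps G.neg ↔
    ¬ ∃ (u : Fin n) (p : G.graph.Walk u u), p.IsCycle ∧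
        (∃ e ∈ p.edges, e ∈ G.pos.edgeSet) ∧ (∃ e ∈ p.edges, e ∈ G.neg.edgeSet) := by
  have hdisj : Disjoint G.pos G.neg :=
    SimpleGraph.disjoint_left.mpr fun i j hp hn ↦ G.disj i j ⟨hp, hn⟩
  refine Iff.trans ?_ (flexibility_eq_zero_iff hdisj)
  simp only [flexibility, Nat.card_fin]
  unfold SignedGraph.graph
  omega

end SGPaper
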